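/- Let K be a field, let P, Q ∈ K[x,y,z] be homogeneous polynomials of degree d, let F_1, …, F_n ∈ K[x,y,z] be homogeneous polynomials and K_1, …, K_n ∈ K[x,y,z] polynomials with P·∂F_i/∂y − Q·∂F_i/∂x = −F_i·K_i for every i, and let α_1, …, α_n ∈ K satisfy ∂Q/∂x − ∂P/∂y = Σ_{i=1}^n α_i·K_i. If a ∈ K³ ∖ {0} is a point with P(a) = Q(a) = 0 and F_i(a) ≠ 0 for all i, then (∂Q/∂x)(a) = (∂P/∂y)(a). -/
import Mathlib

open MvPolynomial

/-- If `P dx + Q dy` is Darboux integrable with respect to integral curves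
`F₁, …, Fₙ` with cofactors `K₁, …, Kₙ` (i.e. `Q_x − P_y = ∑ αᵢ Kᵢ`), then at any
critical point `a ≠ 0` of `P dx + Q dy` not lying on any of the curves `Fᵢ` one has
`Q_x(a) = P_y(a)`. -/
theorem darboux_critical_point_divergence
    (K : Type*) [Field K] (d n : ℕ)
    (P Q : MvPolynomial (Fin 3) K)
    (hP : P.IsHomogeneous d) (hQ : Q.IsHomogeneous d)
    (F Kc : Fin n → MvPolynomial (Fin 3) K)
    (hint : ∀ i, P * pderiv 1 (F i) - Q * pderiv 0 (F i) = -(F i * Kc i))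
    (α : Fin n → K)
    (hdiv : pderiv 0 Q - pderiv 1 P = ∑ i, C (α i) * Kc i)
    (a : Fin 3 → K) (ha : a ≠ 0)
    (hPa : eval a P = 0) (hQa : eval a Q = 0)
    (hFa : ∀ i, eval a (F i) ≠ 0) :
    eval a (pderiv 0 Q) = eval a (pderiv 1 P) := by
  have hK : ∀ i, eval a (Kc i) = 0 := by
    intro i
    have h := congrArg (eval a) (hint i)
    simp only [map_sub, map_mul, map_neg, hPa, hQa, zero_mul, sub_zero, sub_self] at h
    rcases mul_eq_zero.mp (neg_eq_zero.mp h.symm) with h' | h'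
    · exact absurd h' (hFa i)
    · exact h'
  have h := congrArg (eval a) hdiv
  simp only [map_sub, map_sum, map_mul, eval_C, hK, mul_zero, Finset.sum_const_zero] at h
  exact sub_eq_zero.mp h
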